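/- Hessian bound for the policy-gradient value function (Lemma 1, part 2): with the finite-MDP setup below, if additionally 0 ≤ r(s,a) ≤ R for all s, a, ‖∇_w log π(a|s;w)‖ ≤ G, and the second derivative satisfies ‖∇²_w log π(a|s;w)‖ ≤ L (operator norm) for all a, s, w, then for every w ∈ E the value function J(w) = Σ_τ q(τ; w) R(τ) is twice differentiable and its second derivative satisfies the operator-norm bound ‖∇²J(w)‖ ≤ (HG² + L)R/(1 − γ)²; in particular, ∇J is Lipschitz with constant (HG² + L)R/(1 − γ)². -/

import Mathlib

/-! The reward collected at step `h` depends only on the first `h + 1` actions, so its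
expectation does not change when the policy parameter is frozen (at `0`) from step `h + 1` on.
After this truncation the step-`h` expected reward is a nonnegative combination of the functions
`w ↦ exp (∑ i ≤ h, log π(aᵢ | sᵢ; w))`, whose Hessians are bounded by `((h + 1) G)² + (h + 1) L`
times their values; hence its Hessian is at most `(h + 1) (H G² + L) R`. Weighting by `γ ^ h` and
using `∑ (h + 1) γ ^ h ≤ (1 - γ)⁻²` gives the bound on `∇²J`, and the mean value inequality turns
it into a Lipschitz constant for `∇J`. -/

open Finset

theorem Fin.sum_pi_snoc {β M : Type*} [Fintype β] [AddCommMonoid M] {n : ℕ}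
    (f : (Fin (n + 1) → β) → M) :
    ∑ g, f g = ∑ g : Fin n → β, ∑ b, f (Fin.snoc g b) := by
  rw [← (Fin.snocEquiv fun _ => β).sum_comp, Fintype.sum_prod_type, sum_comm]
  rfl

lemma sum_range_succ_mul_pow_le {γ : ℝ} (hγ0 : 0 ≤ γ) (hγ1 : γ < 1) (N : ℕ) :
    ∑ n ∈ range N, ((n : ℝ) + 1) * γ ^ n ≤ 1 / (1 - γ) ^ 2 := by
  have hs := (hasSum_coe_mul_geometric_of_norm_lt_one (𝕜 := ℝ)
    (by rwa [Real.norm_of_nonneg hγ0])).add (hasSum_geometric_of_lt_one hγ0 hγ1)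
  have hsum : γ / (1 - γ) ^ 2 + (1 - γ)⁻¹ = 1 / (1 - γ) ^ 2 := by
    have : 1 - γ ≠ 0 := by linarith
    field_simp
    ring
  rw [hsum] at hs
  refine sum_le_hasSum _ (fun n _ => by positivity) (hs.congr_fun fun n => ?_)
  ring

section Calculus

variable {E : Type*} [NormedAddCommGroup E] [NormedSpace ℝ E]

theorem norm_iteratedFDeriv_two_eq {F : Type*} [NormedAddCommGroup F] [NormedSpace ℝ F]
    (f : E → F) (x : E) : ‖iteratedFDeriv ℝ 2 f x‖ = ‖fderiv ℝ (fderiv ℝ f) x‖ := by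
  rw [← norm_iteratedFDeriv_fderiv, norm_iteratedFDeriv_one]

theorem norm_iteratedFDeriv_sum_mul_le {ι : Type*} [Fintype ι] {n : ℕ} {f : ι → E → ℝ}
    (hf : ∀ i, ContDiff ℝ n (f i)) (c : ι → ℝ) (x : E) :
    ‖iteratedFDeriv ℝ n (fun y => ∑ i, c i * f i y) x‖ ≤
      ∑ i, |c i| * ‖iteratedFDeriv ℝ n (f i) x‖ := by
  rw [iteratedFDeriv_fun_sum_apply fun i _ => (contDiff_const.mul (hf i)).contDiffAt]
  refine (norm_sum_le _ _).trans (sum_le_sum fun i _ => ?_)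
  rw [show (fun y => c i * f i y) = fun y => c i • f i y from rfl,
    iteratedFDeriv_const_smul_apply' (hf i).contDiffAt, norm_smul, Real.norm_eq_abs]

theorem norm_iteratedFDeriv_two_exp_comp_le {g : E → ℝ} (hg : ContDiff ℝ 2 g) (x : E) :
    ‖iteratedFDeriv ℝ 2 (fun y => Real.exp (g y)) x‖ ≤
      Real.exp (g x) * (‖fderiv ℝ g x‖ ^ 2 + ‖iteratedFDeriv ℝ 2 g x‖) := by
  have hDg : Differentiable ℝ (fderiv ℝ g) :=
    (hg.fderiv_right (m := 1) le_rfl).differentiable one_ne_zero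
  have hexp : ∀ y, HasFDerivAt (fun y => Real.exp (g y)) (Real.exp (g y) • fderiv ℝ g y) y :=
    fun y => ((hg.differentiable two_ne_zero) y).hasFDerivAt.exp
  have hexp' : HasFDerivAt (fun y => Real.exp (g y) • fderiv ℝ g y)
      (Real.exp (g x) • fderiv ℝ (fderiv ℝ g) x +
        (Real.exp (g x) • fderiv ℝ g x).smulRight (fderiv ℝ g x)) x :=
    (hexp x).smul (hDg x).hasFDerivAt
  rw [norm_iteratedFDeriv_two_eq, funext fun y => (hexp y).fderiv, hexp'.fderiv,
    norm_iteratedFDeriv_two_eq]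
  calc _ ≤ ‖Real.exp (g x) • fderiv ℝ (fderiv ℝ g) x‖ +
        ‖(Real.exp (g x) • fderiv ℝ g x).smulRight (fderiv ℝ g x)‖ :=
        norm_add_le (E := E →L[ℝ] E →L[ℝ] ℝ) _ _
    _ ≤ Real.exp (g x) * ‖fderiv ℝ (fderiv ℝ g) x‖ +
        Real.exp (g x) * ‖fderiv ℝ g x‖ * ‖fderiv ℝ g x‖ := by
      rw [ContinuousLinearMap.norm_smulRight_apply, norm_smul (Real.exp (g x)) (fderiv ℝ g x),
        Real.norm_of_nonneg (Real.exp_pos _).le]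
      gcongr
      simpa [Real.norm_of_nonneg (Real.exp_pos _).le] using
        ContinuousLinearMap.opNorm_smul_le (Real.exp (g x)) (fderiv ℝ (fderiv ℝ g) x)
    _ = _ := by ring

theorem norm_iteratedFDeriv_two_sum_mul_exp_le {ι κ : Type*} [Fintype ι] [Fintype κ]
    {c : ι → ℝ} (hc : ∀ t, 0 ≤ c t) {g : ι → κ → E → ℝ} (hg : ∀ t k, ContDiff ℝ 2 (g t k))
    {x : E} {G L : κ → ℝ} (hG : ∀ t k, ‖fderiv ℝ (g t k) x‖ ≤ G k)
    (hL : ∀ t k, ‖iteratedFDeriv ℝ 2 (g t k) x‖ ≤ L k) :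
    ‖iteratedFDeriv ℝ 2 (fun y => ∑ t, c t * Real.exp (∑ k, g t k y)) x‖ ≤
      (∑ t, c t * Real.exp (∑ k, g t k x)) * ((∑ k, G k) ^ 2 + ∑ k, L k) := by
  have hsum : ∀ t, ContDiff ℝ 2 fun y => ∑ k, g t k y := fun t => ContDiff.sum fun k _ => hg t k
  have hD : ∀ t, ‖fderiv ℝ (fun y => ∑ k, g t k y) x‖ ≤ ∑ k, G k := fun t => by
    rw [fderiv_fun_sum fun k _ => ((hg t k).differentiable two_ne_zero).differentiableAt]
    exact (norm_sum_le _ _).trans (sum_le_sum fun k _ => hG t k)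
  have hD2 : ∀ t, ‖iteratedFDeriv ℝ 2 (fun y => ∑ k, g t k y) x‖ ≤ ∑ k, L k := fun t => by
    rw [iteratedFDeriv_fun_sum_apply fun k _ => (hg t k).contDiffAt]
    exact (norm_sum_le _ _).trans (sum_le_sum fun k _ => hL t k)
  refine (norm_iteratedFDeriv_sum_mul_le (fun t => Real.contDiff_exp.comp (hsum t)) c x).trans ?_
  rw [sum_mul]
  refine sum_le_sum fun t _ => ?_
  rw [abs_of_nonneg (hc t), mul_assoc]
  refine mul_le_mul_of_nonneg_left
    ((norm_iteratedFDeriv_two_exp_comp_le (hsum t) x).trans ?_) (hc t)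
  gcongr
  exacts [hD t, hD2 t]

theorem norm_fderiv_eq_norm_gradient {F : Type*} [NormedAddCommGroup F] [InnerProductSpace ℝ F]
    [CompleteSpace F] (f : F → ℝ) (x : F) : ‖fderiv ℝ f x‖ = ‖gradient f x‖ := by
  rw [gradient, LinearIsometryEquiv.norm_map]

theorem norm_gradient_sub_le {F : Type*} [NormedAddCommGroup F] [InnerProductSpace ℝ F]
    [CompleteSpace F] {f : F → ℝ} (hf : ContDiff ℝ 2 f) {C : ℝ}
    (hC : ∀ x, ‖iteratedFDeriv ℝ 2 f x‖ ≤ C) (x y : F) :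
    ‖gradient f x - gradient f y‖ ≤ C * ‖x - y‖ := by
  rw [gradient, gradient, ← LinearIsometryEquiv.map_sub, LinearIsometryEquiv.norm_map]
  refine convex_univ.norm_image_sub_le_of_norm_fderiv_le (𝕜 := ℝ) (fun z _ => ?_) (fun z _ => ?_)
    (Set.mem_univ y) (Set.mem_univ x)
  · exact ((hf.fderiv_right (m := 1) le_rfl).differentiable one_ne_zero).differentiableAt
  · rw [← norm_iteratedFDeriv_two_eq]
    exact hC z

theorem norm_iteratedFDeriv_two_discounted_sum_le {H : ℕ} {V : Fin H → E → ℝ}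
    (hV : ∀ h, ContDiff ℝ 2 (V h)) {γ K : ℝ} (hγ0 : 0 ≤ γ) (hγ1 : γ < 1) (hK : 0 ≤ K) {x : E}
    (hVx : ∀ h : Fin H, ‖iteratedFDeriv ℝ 2 (V h) x‖ ≤ ((h : ℝ) + 1) * K) :
    ‖iteratedFDeriv ℝ 2 (fun y => ∑ h : Fin H, γ ^ (h : ℕ) * V h y) x‖ ≤ K / (1 - γ) ^ 2 :=
  calc _ ≤ ∑ h : Fin H, |γ ^ (h : ℕ)| * ‖iteratedFDeriv ℝ 2 (V h) x‖ :=
        norm_iteratedFDeriv_sum_mul_le hV _ x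
    _ ≤ ∑ h : Fin H, γ ^ (h : ℕ) * (((h : ℝ) + 1) * K) := sum_le_sum fun h _ => by
        rw [abs_of_nonneg (by positivity)]
        exact mul_le_mul_of_nonneg_left (hVx h) (by positivity)
    _ = (∑ n ∈ range H, ((n : ℝ) + 1) * γ ^ n) * K := by
        rw [Fin.sum_univ_eq_sum_range (fun n => γ ^ n * (((n : ℝ) + 1) * K)), sum_mul]
        exact sum_congr rfl fun n _ => by ring
    _ ≤ 1 / (1 - γ) ^ 2 * K := mul_le_mul_of_nonneg_right (sum_range_succ_mul_pow_le hγ0 hγ1 H) hK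
    _ = K / (1 - γ) ^ 2 := by ring

end Calculus

namespace MDP

variable {S A : Type*} {H : ℕ}

abbrev Traj (S A : Type*) (H : ℕ) := (Fin (H + 1) → S) × (Fin H → A)

def trajWeight (μ : S → ℝ) (P : S → A → S → ℝ) (p : Fin H → S → A → ℝ) (τ : Traj S A H) : ℝ :=
  μ (τ.1 0) * ∏ i, p i (τ.1 i.castSucc) (τ.2 i) * P (τ.1 i.castSucc) (τ.2 i) (τ.1 i.succ)

variable {μ : S → ℝ} {P : S → A → S → ℝ}

lemma trajWeight_nonneg (hμ : ∀ s, 0 ≤ μ s) (hP : ∀ s a s', 0 ≤ P s a s')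
    {p : Fin H → S → A → ℝ} (hp : ∀ i s a, 0 ≤ p i s a) (τ : Traj S A H) :
    0 ≤ trajWeight μ P p τ :=
  mul_nonneg (hμ _) (prod_nonneg fun _ _ => mul_nonneg (hp _ _ _) (hP _ _ _))

lemma trajWeight_snoc (p : Fin (H + 1) → S → A → ℝ) (τ : Traj S A H) (a : A) (s : S) :
    trajWeight μ P p (Fin.snoc τ.1 s, Fin.snoc τ.2 a) =
      trajWeight μ P (fun i => p i.castSucc) τ *
        (p (Fin.last H) (τ.1 (Fin.last H)) a * P (τ.1 (Fin.last H)) a s) := by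
  simp only [trajWeight, Fin.prod_univ_castSucc, Fin.succ_castSucc, Fin.snoc_castSucc,
    Fin.snoc_last, Fin.succ_last, ← Fin.castSucc_zero]
  ring

lemma trajWeight_eq_mul_exp {p : Fin H → S → A → ℝ} (hp : ∀ i s a, 0 < p i s a)
    (τ : Traj S A H) :
    trajWeight μ P p τ = (μ (τ.1 0) * ∏ i, P (τ.1 i.castSucc) (τ.2 i) (τ.1 i.succ)) *
      Real.exp (∑ i, Real.log (p i (τ.1 i.castSucc) (τ.2 i))) := by
  simp only [trajWeight, prod_mul_distrib, Real.exp_sum, Real.exp_log (hp _ _ _)]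
  ring

variable [Fintype S] [Fintype A]

lemma sum_traj_succ {M : Type*} [AddCommMonoid M] (f : Traj S A (H + 1) → M) :
    ∑ τ, f τ = ∑ τ : Traj S A H, ∑ a, ∑ s, f (Fin.snoc τ.1 s, Fin.snoc τ.2 a) := by
  simp only [Fintype.sum_prod_type, Fin.sum_pi_snoc (n := H + 1),
    Fin.sum_pi_snoc (n := H) (β := A)]
  refine sum_congr rfl fun σ _ => ?_
  rw [sum_comm]
  exact sum_congr rfl fun α _ => sum_comm

lemma sum_trajWeight_mul_of_snoc (hP : ∀ s a, ∑ s', P s a s' = 1)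
    {p : Fin (H + 1) → S → A → ℝ} (hp : ∀ s, ∑ a, p (Fin.last H) s a = 1)
    {f : Traj S A (H + 1) → ℝ} {g : Traj S A H → ℝ}
    (hfg : ∀ τ a s, f (Fin.snoc τ.1 s, Fin.snoc τ.2 a) = g τ) :
    ∑ τ, trajWeight μ P p τ * f τ = ∑ τ, trajWeight μ P (fun i => p i.castSucc) τ * g τ := by
  rw [sum_traj_succ]
  refine sum_congr rfl fun τ _ => ?_
  simp only [trajWeight_snoc, hfg, mul_assoc, ← mul_sum, ← sum_mul, hP, one_mul, hp]

theorem sum_trajWeight (hμ : ∑ s, μ s = 1) (hP : ∀ s a, ∑ s', P s a s' = 1)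
    {p : Fin H → S → A → ℝ} (hp : ∀ i s, ∑ a, p i s a = 1) :
    ∑ τ, trajWeight μ P p τ = 1 := by
  induction H with
  | zero =>
    simpa [trajWeight, Fintype.sum_prod_type, Fin.sum_pi_snoc (n := 0), Fin.snoc_zero]
      using hμ
  | succ H ih =>
    simpa using sum_trajWeight_mul_of_snoc (f := 1) (g := 1) hP (hp (Fin.last H))
      (fun _ _ _ => rfl) |>.trans (by simpa using ih fun i => hp i.castSucc)

def stepReward (μ : S → ℝ) (P : S → A → S → ℝ) (p : Fin H → S → A → ℝ) (r : S → A → ℝ)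
    (h : Fin H) : ℝ :=
  ∑ τ : Traj S A H, trajWeight μ P p τ * r (τ.1 h.castSucc) (τ.2 h)

theorem stepReward_congr (hP : ∀ s a, ∑ s', P s a s' = 1)
    {p p' : Fin H → S → A → ℝ} (hp : ∀ i s, ∑ a, p i s a = 1) (hp' : ∀ i s, ∑ a, p' i s a = 1)
    (r : S → A → ℝ) (h : Fin H) (hpp' : ∀ i ≤ h, p i = p' i) :
    stepReward μ P p r h = stepReward μ P p' r h := by
  induction H with
  | zero => exact h.elim0
  | succ H ih =>
    induction h using Fin.lastCases with
    | last => simp only [funext fun i => hpp' i (Fin.le_last i)]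
    | cast h =>
      have hr : ∀ (τ : Traj S A H) a s,
          r ((Fin.snoc τ.1 s : Fin (H + 2) → S) h.castSucc.castSucc)
            ((Fin.snoc τ.2 a : Fin (H + 1) → A) h.castSucc) = r (τ.1 h.castSucc) (τ.2 h) := by
        simp
      rw [stepReward, sum_trajWeight_mul_of_snoc hP (hp _) hr, stepReward,
        sum_trajWeight_mul_of_snoc hP (hp' _) hr]
      exact ih (fun i => hp i.castSucc) (fun i => hp' i.castSucc) h
        fun i hi => hpp' _ (Fin.castSucc_le_castSucc_iff.2 hi)

lemma stepReward_nonneg (hμ0 : ∀ s, 0 ≤ μ s) (hP0 : ∀ s a s', 0 ≤ P s a s')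
    {p : Fin H → S → A → ℝ} (hp0 : ∀ i s a, 0 ≤ p i s a) {r : S → A → ℝ} (hr : ∀ s a, 0 ≤ r s a)
    (h : Fin H) : 0 ≤ stepReward μ P p r h :=
  sum_nonneg fun τ _ => mul_nonneg (trajWeight_nonneg hμ0 hP0 hp0 τ) (hr _ _)

lemma stepReward_le (hμ0 : ∀ s, 0 ≤ μ s) (hμ1 : ∑ s, μ s = 1) (hP0 : ∀ s a s', 0 ≤ P s a s')
    (hP1 : ∀ s a, ∑ s', P s a s' = 1) {p : Fin H → S → A → ℝ} (hp0 : ∀ i s a, 0 ≤ p i s a)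
    (hp1 : ∀ i s, ∑ a, p i s a = 1) {r : S → A → ℝ} {R : ℝ} (hr : ∀ s a, r s a ≤ R) (h : Fin H) :
    stepReward μ P p r h ≤ R := by
  calc stepReward μ P p r h ≤ ∑ τ, trajWeight μ P p τ * R :=
        sum_le_sum fun τ _ => mul_le_mul_of_nonneg_left (hr _ _) (trajWeight_nonneg hμ0 hP0 hp0 τ)
    _ = R := by rw [← sum_mul, sum_trajWeight hμ1 hP1 hp1, one_mul]

lemma sum_trajWeight_mul_discounted (p : Fin H → S → A → ℝ) (r : S → A → ℝ) (γ : ℝ) :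
    ∑ τ : Traj S A H, trajWeight μ P p τ * ∑ h : Fin H, γ ^ (h : ℕ) * r (τ.1 h.castSucc) (τ.2 h) =
      ∑ h : Fin H, γ ^ (h : ℕ) * stepReward μ P p r h := by
  simp only [stepReward, mul_sum]
  rw [sum_comm]
  exact sum_congr rfl fun h _ => sum_congr rfl fun τ _ => by ring

variable {E : Type*} [NormedAddCommGroup E] {π : A → S → E → ℝ}

def policyAt (π : A → S → E → ℝ) (w : E) : Fin H → S → A → ℝ := fun _ s a => π a s w

def truncatedPolicy (π : A → S → E → ℝ) (h : Fin H) (w : E) : Fin H → S → A → ℝ :=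
  fun i s a => π a s (if i ≤ h then w else 0)

lemma stepReward_policyAt (hP : ∀ s a, ∑ s', P s a s' = 1) (hπ : ∀ s w, ∑ a, π a s w = 1)
    (r : S → A → ℝ) (h : Fin H) (w : E) :
    stepReward μ P (policyAt π w) r h = stepReward μ P (truncatedPolicy π h w) r h :=
  stepReward_congr hP (fun _ s => hπ s w) (fun _ s => hπ s _) r h
    fun _ hi => funext₂ fun s a => congrArg (π a s) (if_pos hi).symm

lemma sum_trajWeight_policyAt_mul_discounted (hP : ∀ s a, ∑ s', P s a s' = 1)
    (hπ : ∀ s w, ∑ a, π a s w = 1) (r : S → A → ℝ) (γ : ℝ) (w : E) :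
    ∑ τ : Traj S A H, trajWeight μ P (policyAt π w) τ *
        ∑ h : Fin H, γ ^ (h : ℕ) * r (τ.1 h.castSucc) (τ.2 h) =
      ∑ h : Fin H, γ ^ (h : ℕ) * stepReward μ P (truncatedPolicy π h w) r h := by
  simp_rw [sum_trajWeight_mul_discounted, stepReward_policyAt hP hπ]

lemma stepReward_truncatedPolicy_eq (hπ0 : ∀ a s w, 0 < π a s w) (r : S → A → ℝ) (h : Fin H)
    (w : E) :
    stepReward μ P (truncatedPolicy π h w) r h =
      ∑ τ : Traj S A H, (μ (τ.1 0) * (∏ i, P (τ.1 i.castSucc) (τ.2 i) (τ.1 i.succ)) *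
        r (τ.1 h.castSucc) (τ.2 h)) *
        Real.exp (∑ i, Real.log (π (τ.2 i) (τ.1 i.castSucc) (if i ≤ h then w else 0))) := by
  refine sum_congr rfl fun τ _ => ?_
  rw [trajWeight_eq_mul_exp (p := truncatedPolicy π h w) fun _ _ _ => hπ0 _ _ _]
  simp only [truncatedPolicy]
  ring

variable [NormedSpace ℝ E]

omit [Fintype S] [Fintype A] in
lemma contDiff_log_truncated (hπC : ∀ a s, ContDiff ℝ 2 fun w => Real.log (π a s w))
    (a : A) (s : S) (i h : Fin H) :
    ContDiff ℝ 2 fun w => Real.log (π a s (if i ≤ h then w else 0)) :=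
  (hπC a s).comp (by split_ifs; exacts [contDiff_id, contDiff_const])

theorem contDiff_stepReward_truncatedPolicy (hπ0 : ∀ a s w, 0 < π a s w)
    (hπC : ∀ a s, ContDiff ℝ 2 fun w => Real.log (π a s w)) (r : S → A → ℝ) (h : Fin H) :
    ContDiff ℝ 2 fun w => stepReward μ P (truncatedPolicy π h w) r h := by
  simp_rw [stepReward_truncatedPolicy_eq hπ0]
  exact ContDiff.sum fun τ _ => contDiff_const.mul <| Real.contDiff_exp.comp <|
    ContDiff.sum fun i _ => contDiff_log_truncated hπC _ _ i h

theorem norm_iteratedFDeriv_stepReward_truncatedPolicy_le_mul (hμ0 : ∀ s, 0 ≤ μ s)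
    (hP0 : ∀ s a s', 0 ≤ P s a s') {r : S → A → ℝ} (hr0 : ∀ s a, 0 ≤ r s a)
    (hπ0 : ∀ a s w, 0 < π a s w) (hπC : ∀ a s, ContDiff ℝ 2 fun w => Real.log (π a s w))
    {G L : ℝ} (hG : ∀ a s w, ‖fderiv ℝ (fun v => Real.log (π a s v)) w‖ ≤ G)
    (hL : ∀ a s w, ‖iteratedFDeriv ℝ 2 (fun v => Real.log (π a s v)) w‖ ≤ L) (h : Fin H) (w : E) :
    ‖iteratedFDeriv ℝ 2 (fun w => stepReward μ P (truncatedPolicy π h w) r h) w‖ ≤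
      stepReward μ P (truncatedPolicy π h w) r h *
        ((((h : ℝ) + 1) * G) ^ 2 + ((h : ℝ) + 1) * L) := by
  have hcount : ∀ c : ℝ, ∑ i : Fin H, (if i ≤ h then c else 0) = ((h : ℝ) + 1) * c := fun c => by
    rw [sum_ite, sum_const_zero, add_zero, sum_const, filter_ge_eq_Iic, Fin.card_Iic, nsmul_eq_mul]
    push_cast
    ring
  simp_rw [stepReward_truncatedPolicy_eq hπ0, ← hcount]
  refine norm_iteratedFDeriv_two_sum_mul_exp_le (fun τ => ?_)
    (fun τ i => contDiff_log_truncated hπC _ _ i h) (fun τ i => ?_) (fun τ i => ?_)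
  · exact mul_nonneg (mul_nonneg (hμ0 _) (prod_nonneg fun _ _ => hP0 _ _ _)) (hr0 _ _)
  · split_ifs with hi
    · simpa [hi] using hG _ _ w
    · simp
  · split_ifs with hi
    · simpa [hi] using hL _ _ w
    · simp [iteratedFDeriv_const_of_ne two_ne_zero]

theorem norm_iteratedFDeriv_stepReward_truncatedPolicy_le (hμ0 : ∀ s, 0 ≤ μ s)
    (hμ1 : ∑ s, μ s = 1) (hP0 : ∀ s a s', 0 ≤ P s a s') (hP1 : ∀ s a, ∑ s', P s a s' = 1)
    {r : S → A → ℝ} {R : ℝ} (hr : ∀ s a, 0 ≤ r s a ∧ r s a ≤ R) (hπ0 : ∀ a s w, 0 < π a s w)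
    (hπ1 : ∀ s w, ∑ a, π a s w = 1) (hπC : ∀ a s, ContDiff ℝ 2 fun w => Real.log (π a s w))
    {G L : ℝ} (hG : ∀ a s w, ‖fderiv ℝ (fun v => Real.log (π a s v)) w‖ ≤ G)
    (hL : ∀ a s w, ‖iteratedFDeriv ℝ 2 (fun v => Real.log (π a s v)) w‖ ≤ L) (hL0 : 0 ≤ L)
    (h : Fin H) (w : E) :
    ‖iteratedFDeriv ℝ 2 (fun w => stepReward μ P (truncatedPolicy π h w) r h) w‖ ≤
      ((h : ℝ) + 1) * ((H * G ^ 2 + L) * R) := by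
  have hπ0' : ∀ i s a, 0 ≤ truncatedPolicy π h w i s a := fun _ _ _ => (hπ0 _ _ _).le
  have hV0 := stepReward_nonneg hμ0 hP0 hπ0' (fun s a => (hr s a).1) h
  have hVR := stepReward_le hμ0 hμ1 hP0 hP1 hπ0' (fun _ s => hπ1 s _) (fun s a => (hr s a).2) h
  have hh : (h : ℝ) + 1 ≤ H := by exact_mod_cast h.isLt
  have hR : 0 ≤ R := hV0.trans hVR
  calc _ ≤ stepReward μ P (truncatedPolicy π h w) r h *
        ((((h : ℝ) + 1) * G) ^ 2 + ((h : ℝ) + 1) * L) :=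
        norm_iteratedFDeriv_stepReward_truncatedPolicy_le_mul hμ0 hP0 (fun s a => (hr s a).1) hπ0
          hπC hG hL h w
    _ ≤ R * ((((h : ℝ) + 1) * G) ^ 2 + ((h : ℝ) + 1) * L) :=
        mul_le_mul_of_nonneg_right hVR (add_nonneg (sq_nonneg _) (by positivity))
    _ = ((h : ℝ) + 1) * ((((h : ℝ) + 1) * G ^ 2 + L) * R) := by ring
    _ ≤ _ := by gcongr

end MDP

open MDP in
theorem policy_value_hessian_bound_general
    (S A : Type*) [Fintype S] [Fintype A] [Nonempty S] [Nonempty A]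
    (H d : ℕ)
    (μ : S → ℝ) (hμ0 : ∀ s, 0 ≤ μ s) (hμ1 : ∑ s, μ s = 1)
    (P : S → A → S → ℝ) (hP0 : ∀ s a s', 0 ≤ P s a s')
    (hP1 : ∀ s a, ∑ s', P s a s' = 1)
    (r : S → A → ℝ) (R : ℝ) (hr : ∀ s a, 0 ≤ r s a ∧ r s a ≤ R)
    (γ : ℝ) (hγ0 : 0 < γ) (hγ1 : γ < 1)
    (π : A → S → EuclideanSpace ℝ (Fin d) → ℝ)
    (hπ0 : ∀ a s w, 0 < π a s w) (hπ1 : ∀ s w, ∑ a, π a s w = 1)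
    (hπC : ∀ a s, ContDiff ℝ 2 (fun w => Real.log (π a s w)))
    (G L : ℝ)
    (hG : ∀ (a : A) (s : S) (w : EuclideanSpace ℝ (Fin d)),
      ‖gradient (fun v => Real.log (π a s v)) w‖ ≤ G)
    (hL : ∀ (a : A) (s : S) (w : EuclideanSpace ℝ (Fin d)),
      ‖iteratedFDeriv ℝ 2 (fun v => Real.log (π a s v)) w‖ ≤ L)
    (q : ((Fin (H + 1) → S) × (Fin H → A)) → EuclideanSpace ℝ (Fin d) → ℝ)
    (hq : ∀ τ w, q τ w =
      μ (τ.1 0) * (∏ h : Fin H, π (τ.2 h) (τ.1 h.castSucc) w)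
        * ∏ h : Fin H, P (τ.1 h.castSucc) (τ.2 h) (τ.1 h.succ))
    (Rew : ((Fin (H + 1) → S) × (Fin H → A)) → ℝ)
    (hRew : ∀ τ, Rew τ = ∑ h : Fin H, γ ^ (h : ℕ) * r (τ.1 h.castSucc) (τ.2 h))
    (J : EuclideanSpace ℝ (Fin d) → ℝ)
    (hJ : ∀ w, J w = ∑ τ : (Fin (H + 1) → S) × (Fin H → A), q τ w * Rew τ) :
    ContDiff ℝ 2 J ∧
    (∀ w : EuclideanSpace ℝ (Fin d),
      ‖iteratedFDeriv ℝ 2 J w‖ ≤ ((H : ℝ) * G ^ 2 + L) * R / (1 - γ) ^ 2) ∧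
    (∀ w v : EuclideanSpace ℝ (Fin d),
      ‖gradient J w - gradient J v‖
        ≤ ((H : ℝ) * G ^ 2 + L) * R / (1 - γ) ^ 2 * ‖w - v‖) := by
  have hR : 0 ≤ R := (hr (Classical.arbitrary S) (Classical.arbitrary A)).1.trans (hr _ _).2
  have hL0 : 0 ≤ L := (norm_nonneg _).trans (hL (Classical.arbitrary A) (Classical.arbitrary S) 0)
  have hG' : ∀ a s w, ‖fderiv ℝ (fun v => Real.log (π a s v)) w‖ ≤ G :=
    fun a s w => (norm_fderiv_eq_norm_gradient _ w).trans_le (hG a s w)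
  have hq' : ∀ τ w, q τ w = trajWeight μ P (policyAt π w) τ := fun τ w => by
    rw [hq, trajWeight, prod_mul_distrib, mul_assoc]
    rfl
  have hJV : J = fun w => ∑ h : Fin H, γ ^ (h : ℕ) * stepReward μ P (truncatedPolicy π h w) r h :=
    funext fun w => by simp_rw [hJ, hq', hRew, sum_trajWeight_policyAt_mul_discounted hP1 hπ1]
  have hVC := contDiff_stepReward_truncatedPolicy (H := H) (μ := μ) (P := P) hπ0 hπC r
  have hJC : ContDiff ℝ 2 J := hJV ▸ ContDiff.sum fun h _ => contDiff_const.mul (hVC h)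
  have hJ2 : ∀ w, ‖iteratedFDeriv ℝ 2 J w‖ ≤ ((H : ℝ) * G ^ 2 + L) * R / (1 - γ) ^ 2 :=
    fun w => hJV ▸ norm_iteratedFDeriv_two_discounted_sum_le hVC hγ0.le hγ1 (by positivity)
      fun h => norm_iteratedFDeriv_stepReward_truncatedPolicy_le hμ0 hμ1 hP0 hP1 hr hπ0 hπ1 hπC
        hG' hL hL0 h w
  exact ⟨hJC, hJ2, norm_gradient_sub_le hJC hJ2⟩

/-- Hessian bound for the policy-gradient value function (Lemma 1, part 2):
if `0 ≤ r ≤ R`, `‖∇_w log π‖ ≤ G` and `‖∇²_w log π‖ ≤ L`, then `J` is twice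
differentiable with `‖∇²J(w)‖ ≤ (HG² + L)R/(1−γ)²`; in particular `∇J` is
Lipschitz with this constant. -/
theorem policy_value_hessian_bound
    (S A : Type*) [Fintype S] [Fintype A] [Nonempty S] [Nonempty A]
    (H d : ℕ) (hH : 0 < H) (hd : 0 < d)
    (μ : S → ℝ) (hμ0 : ∀ s, 0 ≤ μ s) (hμ1 : ∑ s, μ s = 1)
    (P : S → A → S → ℝ) (hP0 : ∀ s a s', 0 ≤ P s a s')
    (hP1 : ∀ s a, ∑ s', P s a s' = 1)
    (r : S → A → ℝ) (R : ℝ) (hr : ∀ s a, 0 ≤ r s a ∧ r s a ≤ R)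
    (γ : ℝ) (hγ0 : 0 < γ) (hγ1 : γ < 1)
    (π : A → S → EuclideanSpace ℝ (Fin d) → ℝ)
    (hπ0 : ∀ a s w, 0 < π a s w) (hπ1 : ∀ s w, ∑ a, π a s w = 1)
    (hπC : ∀ a s, ContDiff ℝ 2 (fun w => Real.log (π a s w)))
    (G L : ℝ)
    (hG : ∀ (a : A) (s : S) (w : EuclideanSpace ℝ (Fin d)),
      ‖gradient (fun v => Real.log (π a s v)) w‖ ≤ G)
    (hL : ∀ (a : A) (s : S) (w : EuclideanSpace ℝ (Fin d)),
      ‖iteratedFDeriv ℝ 2 (fun v => Real.log (π a s v)) w‖ ≤ L)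
    (q : ((Fin (H + 1) → S) × (Fin H → A)) → EuclideanSpace ℝ (Fin d) → ℝ)
    (hq : ∀ τ w, q τ w =
      μ (τ.1 0) * (∏ h : Fin H, π (τ.2 h) (τ.1 h.castSucc) w)
        * ∏ h : Fin H, P (τ.1 h.castSucc) (τ.2 h) (τ.1 h.succ))
    (Rew : ((Fin (H + 1) → S) × (Fin H → A)) → ℝ)
    (hRew : ∀ τ, Rew τ = ∑ h : Fin H, γ ^ (h : ℕ) * r (τ.1 h.castSucc) (τ.2 h))
    (J : EuclideanSpace ℝ (Fin d) → ℝ)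
    (hJ : ∀ w, J w = ∑ τ : (Fin (H + 1) → S) × (Fin H → A), q τ w * Rew τ) :
    ContDiff ℝ 2 J ∧
    (∀ w : EuclideanSpace ℝ (Fin d),
      ‖iteratedFDeriv ℝ 2 J w‖ ≤ ((H : ℝ) * G ^ 2 + L) * R / (1 - γ) ^ 2) ∧
    (∀ w v : EuclideanSpace ℝ (Fin d),
      ‖gradient J w - gradient J v‖
        ≤ ((H : ℝ) * G ^ 2 + L) * R / (1 - γ) ^ 2 * ‖w - v‖) :=
  policy_value_hessian_bound_general S A H d μ hμ0 hμ1 P hP0 hP1 r R hr γ hγ0 hγ1 π hπ0 hπ1 hπC G L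
    hG hL q hq Rew hRew J hJ
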